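/- Let M_b = 0.020955 and define d^b on C ∪ F as M_b times the (unweighted) graph distance between blocks in the graph whose vertices are the blocks B1 = {1,2,3}, B2 = {4,5,6}, {b,7}, {e}, {c}, {a,d,f,g} and whose edges are B1–{b,7}, B1–e, B1–c, B2–{a,d,f,g}, B2–{b,7}, B2–e (points in the same block are at distance 0). Then d^b is a pseudometric on C ∪ F, d^b is consistent with σ*, Σ_{j∈C} d^b(b,j) = 6·M_b > 0, and facility b minimizes Σ_{j∈C} d^b(o,j) over o ∈ F. -/
import Mathlib


/-- Points of the instance: `Sum.inl j` is client `j`, `Sum.inr i` is facility `i`. -/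
abbrev Pt := Fin 7 ⊕ Fin 7

/-- `d` is a pseudometric: nonnegative, symmetric, zero on the diagonal,
and satisfying the triangle inequality `d x y ≤ d x z + d y z`. -/
def IsPseudometric (d : Pt → Pt → ℝ) : Prop :=
  (∀ x y, 0 ≤ d x y) ∧ (∀ x y, d x y = d y x) ∧ (∀ x, d x x = 0) ∧
    (∀ x y z, d x y ≤ d x z + d y z)

/-- Rank function of the instance `I*` (facilities `a,…,g` are `0,…,6`):
clients 1,2,3 rank c ≻ e ≻ b ≻ a ≻ f ≻ g ≻ d, clients 4,5,6 rank
d ≻ g ≻ f ≻ a ≻ e ≻ b ≻ c, client 7 ranks b ≻ a ≻ f ≻ g ≻ e ≻ c ≻ d. -/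
def rkStar (j : Fin 7) : Fin 7 → ℕ :=
  if j.val ≤ 2 then ![3, 2, 0, 6, 1, 4, 5]
  else if j.val ≤ 5 then ![3, 5, 6, 0, 4, 2, 1]
  else ![1, 0, 5, 6, 4, 2, 3]

/-- The preference profile `σ*` of the instance `I*`: `a ≽_j b` iff `a` has
(weakly) smaller rank than `b` in client `j`'s list. -/
def sigmaStar (j : Fin 7) (a b : Fin 7) : Prop := rkStar j a ≤ rkStar j b

/-- `d` is consistent with the profile `σ`: whenever client `j` prefers `a` to `b`,
facility `a` is at least as close to `j` as `b`. -/
def Consistent (d : Pt → Pt → ℝ) (σ : Fin 7 → Fin 7 → Fin 7 → Prop) : Prop :=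
  ∀ j a b, σ j a b → d (Sum.inr a) (Sum.inl j) ≤ d (Sum.inr b) (Sum.inl j)

/-- Expected social cost of the distribution `q` under metric `d`. -/
def cost (d : Pt → Pt → ℝ) (q : Fin 7 → ℝ) : ℝ :=
  ∑ i, q i * ∑ j, d (Sum.inr i) (Sum.inl j)

/-- Total cost of the clients if facility `o` is chosen. -/
def facCost (d : Pt → Pt → ℝ) (o : Fin 7) : ℝ :=
  ∑ j, d (Sum.inr o) (Sum.inl j)

/-- Optimal (minimum) total cost over all facilities. -/
noncomputable def OPT (d : Pt → Pt → ℝ) : ℝ :=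
  Finset.univ.inf' Finset.univ_nonempty (facCost d)

/-- The block graph for `d^b`: vertices are the blocks
`0 = B1 = {1,2,3}`, `1 = B2 = {4,5,6}`, `2 = {b,7}`, `3 = {e}`, `4 = {c}`,
`5 = {a,d,f,g}`, with edges B1–{b,7}, B1–e, B1–c, B2–{a,d,f,g}, B2–{b,7}, B2–e. -/
def graphB : SimpleGraph (Fin 6) :=
  SimpleGraph.fromRel (fun u v =>
    (u, v) ∈ ([(0, 2), (0, 3), (0, 4), (1, 5), (1, 2), (1, 3)] :
      List (Fin 6 × Fin 6)))

/-- The block of each point (clients 1,2,3 ↦ B1, clients 4,5,6 ↦ B2,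
client 7 ↦ {b,7}; facilities b ↦ {b,7}, e ↦ {e}, c ↦ {c}, a,d,f,g ↦ {a,d,f,g}). -/
def blkB : Pt → Fin 6
  | Sum.inl j => if j.val ≤ 2 then 0 else if j.val ≤ 5 then 1 else 2
  | Sum.inr i => ![5, 2, 4, 5, 3, 5, 5] i

/-- `d^b` is `M_b = 0.020955` times the graph distance between the blocks of the
two points (points in the same block are at distance 0). -/
noncomputable def dB : Pt → Pt → ℝ :=
  fun x y => 0.020955 * (graphB.dist (blkB x) (blkB y) : ℝ)

instance : DecidableRel graphB.Adj := fun u v =>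
  decidable_of_iff (u ≠ v ∧
    (((u, v) ∈ ([(0, 2), (0, 3), (0, 4), (1, 5), (1, 2), (1, 3)] : List (Fin 6 × Fin 6))) ∨
     ((v, u) ∈ ([(0, 2), (0, 3), (0, 4), (1, 5), (1, 2), (1, 3)] : List (Fin 6 × Fin 6)))))
    Iff.rfl

lemma graphB_connected : graphB.Connected := by
  have h02 : graphB.Adj 0 2 := by decide
  have h03 : graphB.Adj 0 3 := by decide
  have h04 : graphB.Adj 0 4 := by decide
  have h21 : graphB.Adj 2 1 := by decide
  have h15 : graphB.Adj 1 5 := by decide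
  have r01 : graphB.Reachable 0 1 := h02.reachable.trans h21.reachable
  have reach0 : ∀ v : Fin 6, graphB.Reachable 0 v := by
    intro v
    fin_cases v
    · rfl
    · exact r01
    · exact h02.reachable
    · exact h03.reachable
    · exact h04.reachable
    · exact r01.trans h15.reachable
  exact ⟨fun u v => (reach0 u).symm.trans (reach0 v)⟩

lemma walk_pot (f : Fin 6 → ℕ) (hf : ∀ u v, graphB.Adj u v → f v ≤ f u + 1) :
    ∀ {u v : Fin 6} (p : graphB.Walk u v), f v ≤ f u + p.length := by
  intro u v p
  induction p with
  | nil => simp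
  | cons h q ih =>
    have := hf _ _ h
    simp only [SimpleGraph.Walk.length_cons]
    omega

lemma dist_lb (f : Fin 6 → ℕ) (hf : ∀ u v, graphB.Adj u v → f v ≤ f u + 1)
    (u v : Fin 6) : f v ≤ f u + graphB.dist u v := by
  obtain ⟨p, hp⟩ := (graphB_connected u v).exists_walk_length_eq_dist
  simpa [hp] using walk_pot f hf p

/-- Distances from facilities (rows `a..g`) to clients (columns `1..7`). -/
def Dfc : Fin 7 → Fin 7 → ℕ :=
  ![![3, 3, 3, 1, 1, 1, 2],
    ![1, 1, 1, 1, 1, 1, 0],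
    ![1, 1, 1, 3, 3, 3, 2],
    ![3, 3, 3, 1, 1, 1, 2],
    ![1, 1, 1, 1, 1, 1, 2],
    ![3, 3, 3, 1, 1, 1, 2],
    ![3, 3, 3, 1, 1, 1, 2]]

lemma dist_key : ∀ (i j : Fin 7),
    graphB.dist (blkB (Sum.inr i)) (blkB (Sum.inl j)) = Dfc i j := by
  have h02 : graphB.Adj 0 2 := by decide
  have h20 : graphB.Adj 2 0 := by decide
  have h21 : graphB.Adj 2 1 := by decide
  have h30 : graphB.Adj 3 0 := by decide
  have h40 : graphB.Adj 4 0 := by decide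
  have h51 : graphB.Adj 5 1 := by decide
  have h12 : graphB.Adj 1 2 := by decide
  have two : ∀ u v : Fin 6, u ≠ v → ¬ graphB.Adj u v →
      ∀ p : graphB.Walk u v, p.length = 2 → graphB.dist u v = 2 := by
    intro u v hne hadj p hp
    have hub : graphB.dist u v ≤ 2 := hp ▸ SimpleGraph.dist_le p
    have h0 : graphB.dist u v ≠ 0 :=
      (graphB_connected.dist_eq_zero_iff (u := u) (v := v)).not.mpr hne
    have h1 : graphB.dist u v ≠ 1 := fun h =>
      hadj (SimpleGraph.dist_eq_one_iff_adj.mp h)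
    omega
  have d52 : graphB.dist 5 2 = 2 :=
    two 5 2 (by decide) (by decide) (.cons h51 (.cons h12 .nil)) rfl
  have d42 : graphB.dist 4 2 = 2 :=
    two 4 2 (by decide) (by decide) (.cons h40 (.cons h02 .nil)) rfl
  have d32 : graphB.dist 3 2 = 2 :=
    two 3 2 (by decide) (by decide) (.cons h30 (.cons h02 .nil)) rfl
  have hf5 : ∀ u v, graphB.Adj u v →
      (![3,1,2,2,4,0] : Fin 6 → ℕ) v ≤ ![3,1,2,2,4,0] u + 1 := by decide
  have hf4 : ∀ u v, graphB.Adj u v →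
      (![1,3,2,2,0,4] : Fin 6 → ℕ) v ≤ ![1,3,2,2,0,4] u + 1 := by decide
  have d50 : graphB.dist 5 0 = 3 := by
    have hub : graphB.dist 5 0 ≤ 3 :=
      SimpleGraph.dist_le (.cons h51 (.cons h12 (.cons h20 .nil)))
    have hlb : (![3,1,2,2,4,0] : Fin 6 → ℕ) 0 ≤ ![3,1,2,2,4,0] 5 + graphB.dist 5 0 :=
      dist_lb _ hf5 5 0
    have e1 : (![3,1,2,2,4,0] : Fin 6 → ℕ) 0 = 3 := rfl
    have e2 : (![3,1,2,2,4,0] : Fin 6 → ℕ) 5 = 0 := rfl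
    rw [e1, e2] at hlb
    omega
  have d41 : graphB.dist 4 1 = 3 := by
    have hub : graphB.dist 4 1 ≤ 3 :=
      SimpleGraph.dist_le (.cons h40 (.cons h02 (.cons h21 .nil)))
    have hlb : (![1,3,2,2,0,4] : Fin 6 → ℕ) 1 ≤ ![1,3,2,2,0,4] 4 + graphB.dist 4 1 :=
      dist_lb _ hf4 4 1
    have e1 : (![1,3,2,2,0,4] : Fin 6 → ℕ) 1 = 3 := rfl
    have e2 : (![1,3,2,2,0,4] : Fin 6 → ℕ) 4 = 0 := rfl
    rw [e1, e2] at hlb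
    omega
  intro i j
  fin_cases i <;> fin_cases j <;>
    norm_num [blkB, Dfc] <;>
    first
      | exact d50 | exact d41 | exact d52 | exact d42 | exact d32
      | exact SimpleGraph.dist_self
      | decide

/-- `d^b` is a pseudometric consistent with `σ*`, the total client cost
of facility `b` is `6 · M_b > 0`, and `b` minimizes the total client cost. -/
theorem dB_certificate :
    IsPseudometric dB ∧ Consistent dB sigmaStar ∧
      facCost dB 1 = 6 * 0.020955 ∧ 0 < facCost dB 1 ∧
      ∀ o : Fin 7, facCost dB 1 ≤ facCost dB o := by
  have key : ∀ i j, dB (Sum.inr i) (Sum.inl j) = 0.020955 * (Dfc i j : ℝ) := by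
    intro i j; rw [dB, dist_key]
  have hM : (0:ℝ) < 0.020955 := by norm_num
  have hfc : ∀ o, facCost dB o = 0.020955 * ((∑ j, Dfc o j : ℕ) : ℝ) := by
    intro o
    unfold facCost
    simp only [key]
    rw [← Finset.mul_sum, Nat.cast_sum]
  have hsum1 : (∑ j, Dfc 1 j) = 6 := by decide
  refine ⟨⟨?_, ?_, ?_, ?_⟩, ?_, ?_, ?_, ?_⟩
  · intro x y; unfold dB; positivity
  · intro x y; unfold dB; rw [SimpleGraph.dist_comm]
  · intro x; unfold dB; rw [SimpleGraph.dist_self]; norm_num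
  · intro x y z
    unfold dB
    rw [← mul_add, ← Nat.cast_add]
    have h := graphB_connected.dist_triangle (u := blkB x) (v := blkB z) (w := blkB y)
    rw [SimpleGraph.dist_comm (u := blkB z)] at h
    exact mul_le_mul_of_nonneg_left (by exact_mod_cast h) (le_of_lt hM)
  · intro j a b h
    rw [key, key]
    have hn : Dfc a j ≤ Dfc b j := by
      revert h
      have : ∀ j a b : Fin 7, rkStar j a ≤ rkStar j b → Dfc a j ≤ Dfc b j := by decide
      exact this j a b
    exact mul_le_mul_of_nonneg_left (by exact_mod_cast hn) (le_of_lt hM)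
  · rw [hfc, hsum1]; norm_num
  · rw [hfc, hsum1]; norm_num
  · intro o
    rw [hfc, hfc, hsum1]
    have h6 : ∀ o : Fin 7, 6 ≤ ∑ j, Dfc o j := by decide
    exact mul_le_mul_of_nonneg_left (by exact_mod_cast h6 o) (le_of_lt hM)
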